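/- arXiv:2105.01258 — 2 statements merged into one kernel-verified Lean document; each statement's English description precedes it below -/
import Mathlib

section
/- Let q be a point in the plane and let v_1, ..., v_n be points in the plane arranged so that the closed polygonal loop through v_1, ..., v_n winds once around q (q lies in a bounded region enclosed by the polygon). Then the sum over i of the angles ∠ v_{i-1} q v_i (indices mod n) is at least 2π. -/
/-!
If the angles subtended at `q` by the edges sum to less than `2π`, lift the directions of the
vertices seen from `q` to real numbers by adding up the oriented angles edge by edge. The
direction of every point of an edge lies between the lifts at its endpoints, so all directions
of the polygon lie in an interval of length less than `2π`. The ray from `q` pointing opposite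
to the midpoint of that interval therefore misses the polygon; it is connected and unbounded,
so the component of `q` in the complement of the polygon is unbounded.
-/

open EuclideanGeometry Set
open Real Module Bornology

lemma dist_le_sum_range_dist {α : Type*} [PseudoMetricSpace α] (f : ℕ → α) {j k n : ℕ}
    (hj : j ≤ n) (hk : k ≤ n) :
    dist (f j) (f k) ≤ ∑ i ∈ Finset.range n, dist (f i) (f (i + 1)) := by
  wlog hjk : j ≤ k generalizing j k
  · rw [dist_comm]
    exact this hk hj (le_of_not_ge hjk)
  calc dist (f j) (f k) ≤ ∑ i ∈ Finset.Ico j k, dist (f i) (f (i + 1)) :=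
        dist_le_Ico_sum_dist f hjk
    _ ≤ ∑ i ∈ Finset.range n, dist (f i) (f (i + 1)) := by
        refine Finset.sum_le_sum_of_subset_of_nonneg ?_ fun _ _ _ => dist_nonneg
        rw [Finset.range_eq_Ico]
        exact Finset.Ico_subset_Ico (Nat.zero_le j) hk

lemma exists_forall_uIcc_subset_ball {f : ℕ → ℝ} {n : ℕ} {r : ℝ}
    (h : ∑ i ∈ Finset.range n, dist (f i) (f (i + 1)) < 2 * r) :
    ∃ c, ∀ i < n, uIcc (f i) (f (i + 1)) ⊆ Metric.ball c r := by
  have hne : (Finset.range (n + 1)).Nonempty := Finset.nonempty_range_add_one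
  set m := (Finset.range (n + 1)).inf' hne f
  set M := (Finset.range (n + 1)).sup' hne f
  have hmM : M - m < 2 * r := by
    obtain ⟨j, hj, hM⟩ := Finset.exists_mem_eq_sup' hne f
    obtain ⟨k, hk, hm⟩ := Finset.exists_mem_eq_inf' hne f
    rw [Finset.mem_range_succ_iff] at hj hk
    calc M - m ≤ dist (f j) (f k) := by
          rw [show M = f j from hM, show m = f k from hm, Real.dist_eq]
          exact le_abs_self _
      _ ≤ ∑ i ∈ Finset.range n, dist (f i) (f (i + 1)) := dist_le_sum_range_dist f hj hk
      _ < 2 * r := h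
  refine ⟨(m + M) / 2, fun i hi => ?_⟩
  have hmem : ∀ j ≤ n, f j ∈ Icc m M := fun j hj =>
    ⟨Finset.inf'_le f (Finset.mem_range_succ_iff.2 hj),
      Finset.le_sup' f (Finset.mem_range_succ_iff.2 hj)⟩
  refine (uIcc_subset_Icc (hmem i hi.le) (hmem (i + 1) hi)).trans ?_
  rw [Real.ball_eq_Ioo]
  exact Icc_subset_Ioo (by linarith) (by linarith)

lemma Real.Angle.coe_ne_coe_add_pi_of_dist_lt {θ c : ℝ} (h : dist θ c < π) :
    (θ : Angle) ≠ (c + π : ℝ) := by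
  intro hθ
  have hsub : ((θ - c : ℝ) : Angle) = π := by
    rw [Real.Angle.coe_sub, hθ, Real.Angle.coe_add, add_sub_cancel_left]
  rw [Real.dist_eq, abs_lt] at h
  have := congrArg Real.Angle.toReal hsub
  rw [Real.Angle.toReal_pi, Real.Angle.toReal_coe_eq_self_iff.2 ⟨h.1, h.2.le⟩] at this
  exact h.2.ne this

lemma not_isBounded_connectedComponentIn_of_ray_subset {E : Type*} [NormedAddCommGroup E]
    [NormedSpace ℝ E] {s : Set E} {q u : E} (hu : u ≠ 0)
    (hray : ∀ t : ℝ, 0 ≤ t → q + t • u ∈ s) :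
    ¬ IsBounded (connectedComponentIn s q) := by
  intro hbdd
  have hsub : (fun t : ℝ => q + t • u) '' Ici 0 ⊆ connectedComponentIn s q :=
    (isPreconnected_Ici.image _ (by fun_prop)).subset_connectedComponentIn
      ⟨0, self_mem_Ici, by simp⟩ (image_subset_iff.2 hray)
  obtain ⟨C, hC⟩ := hbdd.subset_closedBall q
  have hnorm := norm_pos_iff.2 hu
  have := hC (hsub ⟨(|C| + 1) / ‖u‖, mem_Ici.2 (by positivity), rfl⟩)
  rw [Metric.mem_closedBall, dist_eq_norm, add_sub_cancel_left, norm_smul, Real.norm_eq_abs,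
    abs_of_nonneg (by positivity), div_mul_cancel₀ _ hnorm.ne'] at this
  linarith [le_abs_self C]

lemma mem_uIcc_zero_of_abs_le {s d : ℝ} (hsign : 0 ≤ s ↔ 0 ≤ d) (habs : |s| ≤ |d|) :
    s ∈ uIcc 0 d := by
  rw [Set.mem_uIcc]
  rcases le_or_gt 0 d with hd | hd
  · have hs := hsign.2 hd
    rw [abs_of_nonneg hs, abs_of_nonneg hd] at habs
    exact .inl ⟨hs, habs⟩
  · have hs : s < 0 := lt_of_not_ge fun h => hd.not_ge (hsign.1 h)
    rw [abs_of_neg hs, abs_of_neg hd] at habs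
    exact .inr ⟨by linarith, hs.le⟩

namespace Orientation

variable {V : Type*} [NormedAddCommGroup V] [InnerProductSpace ℝ V] [Fact (finrank ℝ V = 2)]
  (o : Orientation ℝ V (Fin 2))

lemma toReal_oangle_mem_uIcc_of_mem_segment {x y z : V} (hx : x ≠ 0) (hy : y ≠ 0)
    (hz : z ∈ segment ℝ x y) : (o.oangle x z).toReal ∈ uIcc 0 (o.oangle x y).toReal := by
  rcases eq_or_ne z 0 with rfl | hz0
  · simp
  have hangle : InnerProductGeometry.angle x z ≤ InnerProductGeometry.angle x y := by
    have := angle_add_of_ne_of_ne hx.symm hy.symm (mem_segment_iff_wbtw.1 hz)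
    simp only [EuclideanGeometry.angle, vsub_eq_sub, sub_zero] at this
    linarith [InnerProductGeometry.angle_nonneg z y]
  obtain ⟨a, b, -, hb, hab, rfl⟩ := hz
  rcases hb.eq_or_lt with rfl | hb
  · simp [show a = 1 by linarith]
  have hsign : (o.oangle x (a • x + b • y)).sign = (o.oangle x y).sign := by
    rw [o.oangle_sign_smul_add_smul_right, sign_pos hb, one_mul]
  refine mem_uIcc_zero_of_abs_le ?_ ?_
  · simp only [Real.Angle.toReal_nonneg_iff_sign_nonneg, hsign]
  · rwa [← o.angle_eq_abs_oangle_toReal hx hz0, ← o.angle_eq_abs_oangle_toReal hx hy]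

noncomputable def cumulativeOangle (x : ℕ → V) (i : ℕ) : ℝ :=
  ∑ j ∈ Finset.range i, (o.oangle (x j) (x (j + 1))).toReal

variable {o} {x : ℕ → V}

lemma cumulativeOangle_succ (x : ℕ → V) (i : ℕ) :
    o.cumulativeOangle x (i + 1) =
      o.cumulativeOangle x i + (o.oangle (x i) (x (i + 1))).toReal :=
  Finset.sum_range_succ _ _

lemma coe_cumulativeOangle (hx : ∀ i, x i ≠ 0) (i : ℕ) :
    (o.cumulativeOangle x i : Real.Angle) = o.oangle (x 0) (x i) := by
  induction i with
  | zero => simp [cumulativeOangle]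
  | succ i ih =>
    rw [cumulativeOangle_succ, Real.Angle.coe_add, ih,
      Real.Angle.coe_toReal, o.oangle_add (hx 0) (hx i) (hx (i + 1))]

lemma dist_cumulativeOangle_succ (hx : ∀ i, x i ≠ 0) (i : ℕ) :
    dist (o.cumulativeOangle x i) (o.cumulativeOangle x (i + 1)) =
      InnerProductGeometry.angle (x i) (x (i + 1)) := by
  rw [o.angle_eq_abs_oangle_toReal (hx i) (hx (i + 1)), Real.dist_eq, cumulativeOangle_succ,
    abs_sub_comm, add_sub_cancel_left]

lemma exists_oangle_eq_of_mem_segment (hx : ∀ i, x i ≠ 0) {i : ℕ} {z : V}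
    (hz : z ∈ segment ℝ (x i) (x (i + 1))) (hz0 : z ≠ 0) :
    ∃ θ ∈ uIcc (o.cumulativeOangle x i) (o.cumulativeOangle x (i + 1)),
      o.oangle (x 0) z = θ := by
  refine ⟨o.cumulativeOangle x i + (o.oangle (x i) z).toReal, ?_, ?_⟩
  · have := mem_image_of_mem (o.cumulativeOangle x i + ·)
      (o.toReal_oangle_mem_uIcc_of_mem_segment (hx i) (hx (i + 1)) hz)
    rwa [image_const_add_uIcc, add_zero, ← cumulativeOangle_succ] at this
  · rw [Real.Angle.coe_add, coe_cumulativeOangle hx, Real.Angle.coe_toReal,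
      o.oangle_add (hx 0) (hx i) hz0]

end Orientation

section Plane

variable {V : Type*} [NormedAddCommGroup V] [InnerProductSpace ℝ V] [Fact (finrank ℝ V = 2)]

lemma exists_ray_subset_compl_of_sum_angle_lt {n : ℕ} {p : ℕ → V} {q : V}
    (hq : ∀ i, p i ≠ q) (hqoff : q ∉ ⋃ i ∈ Finset.range n, segment ℝ (p i) (p (i + 1)))
    (hsum : ∑ i ∈ Finset.range n, ∠ (p i) q (p (i + 1)) < 2 * π) :
    ∃ u ≠ 0, ∀ t : ℝ, 0 ≤ t →
      q + t • u ∈ (⋃ i ∈ Finset.range n, segment ℝ (p i) (p (i + 1)))ᶜ := by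
  have : FiniteDimensional ℝ V := .of_fact_finrank_eq_two
  let o : Orientation ℝ V (Fin 2) := (finBasisOfFinrankEq ℝ V Fact.out).orientation
  set x : ℕ → V := fun i => p i - q
  have hx : ∀ i, x i ≠ 0 := fun i => sub_ne_zero.2 (hq i)
  have hdist : ∑ i ∈ Finset.range n,
      dist (o.cumulativeOangle x i) (o.cumulativeOangle x (i + 1)) < 2 * π := by
    rw [Finset.sum_congr rfl fun i _ => Orientation.dist_cumulativeOangle_succ hx i]
    exact hsum
  obtain ⟨c, hc⟩ := exists_forall_uIcc_subset_ball hdist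
  refine ⟨o.rotation (c + π : ℝ) (x 0), by simpa using hx 0, fun t ht hmem => ?_⟩
  rcases ht.eq_or_lt with rfl | ht
  · exact hqoff (by simpa using hmem)
  simp only [mem_iUnion] at hmem
  obtain ⟨i, hi, hseg⟩ := hmem
  have hz : t • o.rotation (c + π : ℝ) (x 0) ∈ segment ℝ (x i) (x (i + 1)) := by
    rw [← mem_segment_translate ℝ q]
    simpa [x] using hseg
  obtain ⟨θ, hθ, hθeq⟩ := Orientation.exists_oangle_eq_of_mem_segment hx hz
    (smul_ne_zero ht.ne' (by simpa using hx 0))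
  rw [o.oangle_smul_right_of_pos _ _ ht, o.oangle_rotation_self_right (hx 0)] at hθeq
  exact Real.Angle.coe_ne_coe_add_pi_of_dist_lt (hc i (Finset.mem_range.1 hi) hθ) hθeq.symm

theorem two_pi_le_sum_angle_of_isBounded_connectedComponentIn {n : ℕ} {p : ℕ → V} {q : V}
    (hq : ∀ i, p i ≠ q) (hqoff : q ∉ ⋃ i ∈ Finset.range n, segment ℝ (p i) (p (i + 1)))
    (hbdd : IsBounded
      (connectedComponentIn (⋃ i ∈ Finset.range n, segment ℝ (p i) (p (i + 1)))ᶜ q)) :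
    2 * π ≤ ∑ i ∈ Finset.range n, ∠ (p i) q (p (i + 1)) := by
  by_contra! hsum
  obtain ⟨u, hu, hray⟩ := exists_ray_subset_compl_of_sum_angle_lt hq hqoff hsum
  exact not_isBounded_connectedComponentIn_of_ray_subset hu hray hbdd

end Plane

theorem stmt0_general (n : ℕ) (v : ℤ → ℂ)
    (q : ℂ) (hq : ∀ i : ℤ, q ≠ v i)
    (hqoff : q ∉ ⋃ i ∈ Finset.range n, segment ℝ (v i) (v (i + 1)))
    (hbounded : Bornology.IsBounded
      (connectedComponentIn (⋃ i ∈ Finset.range n, segment ℝ (v i) (v (i + 1)))ᶜ q)) :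
    2 * Real.pi ≤ ∑ i ∈ Finset.range n, EuclideanGeometry.angle (v i) q (v (i + 1)) := by
  have := Complex.finrank_real_complex_fact
  simpa using two_pi_le_sum_angle_of_isBounded_connectedComponentIn (p := fun i : ℕ => v i)
    (fun i => (hq i).symm) (by simpa using hqoff) (by simpa using hbounded)

/-- Let `q` be a point in the plane (modeled as `ℂ`) and `v 0, …, v (n-1)`
points in the plane, extended periodically (`v (i + n) = v i`), all distinct from `q`.
If `q` lies in a bounded region enclosed by the closed polygonal loop through the `v i`
(i.e. `q` is off the polygon and its connected component in the complement of the union of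
the edges is bounded), then the sum of the unsigned angles `∠ v (i) q (v (i+1))`
(equivalently `∠ v_{i-1} q v_i`, indices mod `n`) is at least `2 * π`. -/
theorem stmt0 (n : ℕ) (hn : 0 < n) (v : ℤ → ℂ) (hper : ∀ i : ℤ, v (i + n) = v i)
    (q : ℂ) (hq : ∀ i : ℤ, q ≠ v i)
    (hqoff : q ∉ ⋃ i ∈ Finset.range n, segment ℝ (v i) (v (i + 1)))
    (hbounded : Bornology.IsBounded
      (connectedComponentIn (⋃ i ∈ Finset.range n, segment ℝ (v i) (v (i + 1)))ᶜ q)) :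
    2 * Real.pi ≤ ∑ i ∈ Finset.range n, EuclideanGeometry.angle (v i) q (v (i + 1)) :=
  stmt0_general n v q hq hqoff hbounded
end

section
/- Let q be a point in ℝ³ and v_0, v_1, ..., v_n points in ℝ³ all distinct from q, with v_n = v_0, such that ∑_{i=1}^n ∠ v_{i-1} q v_i = 2π. Then there exist points q', v_0', ..., v_n' in the plane ℝ², with v_n' = v_0', such that for every i, dist(q', v_i') = dist(q, v_i) and dist(v_{i-1}', v_i') = dist(v_{i-1}, v_i); i.e., the fan of triangles q v_{i-1} v_i can be developed isometrically into the plane so that consecutive triangles share edges and the configuration closes up. -/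
open EuclideanGeometry

/-! Lay the fan out around the origin: `v i` goes to the point at distance `dist q (v i)` and
polar angle `θ i = ∑_{j<i} ∠ v_j q v_{j+1}`. By the law of cosines, the distance of two such points
depends only on the two radii and the cosine of the angle between them, so each triangle
`q v_{i-1} v_i` is reproduced; the total angle `2π` makes `v' n` and `v' 0` coincide. -/

noncomputable def polarPoint (r θ : ℝ) : EuclideanSpace ℝ (Fin 2) :=
  !₂[r * Real.cos θ, r * Real.sin θ]

lemma dist_polarPoint_sq (r₁ r₂ θ₁ θ₂ : ℝ) :
    dist (polarPoint r₁ θ₁) (polarPoint r₂ θ₂) ^ 2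
      = r₁ ^ 2 + r₂ ^ 2 - 2 * r₁ * r₂ * Real.cos (θ₂ - θ₁) := by
  rw [EuclideanSpace.dist_eq, Real.sq_sqrt (by positivity)]
  simp only [polarPoint, Real.dist_eq, sq_abs, Fin.sum_univ_two, Fin.isValue,
    Matrix.cons_val_zero, Matrix.cons_val_one, Matrix.cons_val_fin_one, Real.cos_sub]
  nlinarith [Real.sin_sq_add_cos_sq θ₁, Real.sin_sq_add_cos_sq θ₂]

lemma norm_polarPoint (r θ : ℝ) : ‖polarPoint r θ‖ = |r| := by
  rw [EuclideanSpace.norm_eq, ← Real.sqrt_sq_eq_abs]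
  congr 1
  simp only [polarPoint, Real.norm_eq_abs, sq_abs, Fin.sum_univ_two, Fin.isValue,
    Matrix.cons_val_zero, Matrix.cons_val_one, Matrix.cons_val_fin_one]
  nlinarith [Real.sin_sq_add_cos_sq θ]

lemma polarPoint_add_two_pi (r θ : ℝ) : polarPoint r (θ + 2 * Real.pi) = polarPoint r θ := by
  simp [polarPoint]

lemma dist_polarPoint_eq_of_angle {V P : Type*} [NormedAddCommGroup V] [InnerProductSpace ℝ V]
    [MetricSpace P] [NormedAddTorsor V P] (q a b : P) {θ₁ θ₂ : ℝ} (hθ : θ₂ - θ₁ = ∠ a q b) :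
    dist (polarPoint (dist q a) θ₁) (polarPoint (dist q b) θ₂) = dist a b := by
  rw [← sq_eq_sq₀ dist_nonneg dist_nonneg, dist_polarPoint_sq, hθ, dist_comm q a, dist_comm q b]
  linear_combination (law_cos a q b).symm

theorem stmt3_general (n : ℕ) (q : EuclideanSpace ℝ (Fin 3)) (v : ℕ → EuclideanSpace ℝ (Fin 3))
    (hclose : v n = v 0)
    (hsum : ∑ i ∈ Finset.range n, EuclideanGeometry.angle (v i) q (v (i + 1)) = 2 * Real.pi) :
    ∃ (q' : EuclideanSpace ℝ (Fin 2)) (v' : ℕ → EuclideanSpace ℝ (Fin 2)),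
      v' n = v' 0 ∧
      (∀ i ≤ n, dist q' (v' i) = dist q (v i)) ∧
      (∀ i, 1 ≤ i → i ≤ n → dist (v' (i - 1)) (v' i) = dist (v (i - 1)) (v i)) := by
  set θ : ℕ → ℝ := fun i => ∑ j ∈ Finset.range i, ∠ (v j) q (v (j + 1)) with hθ
  refine ⟨0, fun i => polarPoint (dist q (v i)) (θ i), ?_, ?_, ?_⟩
  · have hθn : θ n = θ 0 + 2 * Real.pi := by simpa [hθ] using hsum
    simp only [hθn, polarPoint_add_two_pi, hclose]
  · intro i _
    rw [dist_zero_left, norm_polarPoint, abs_of_nonneg dist_nonneg]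
  · rintro (_ | k) hk _
    · omega
    · exact dist_polarPoint_eq_of_angle q _ _ (by simp [hθ, Finset.sum_range_succ])

/-- Let `q ∈ ℝ³` and `v 0, v 1, …, v n` points of `ℝ³` all distinct from `q`,
with `v n = v 0`, such that `∑_{i=1}^n ∠ v (i-1) q (v i) = 2π`.  Then there exist points
`q'` and `v' 0, …, v' n` in the plane `ℝ²`, with `v' n = v' 0`, such that for every
`i ≤ n`, `dist q' (v' i) = dist q (v i)`, and for every `1 ≤ i ≤ n`,
`dist (v' (i-1)) (v' i) = dist (v (i-1)) (v i)`: the fan of triangles `q v_{i-1} v_i`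
develops isometrically into the plane, closing up. -/
theorem stmt3 (n : ℕ) (q : EuclideanSpace ℝ (Fin 3)) (v : ℕ → EuclideanSpace ℝ (Fin 3))
    (hq : ∀ i ≤ n, v i ≠ q) (hclose : v n = v 0)
    (hsum : ∑ i ∈ Finset.range n, EuclideanGeometry.angle (v i) q (v (i + 1)) = 2 * Real.pi) :
    ∃ (q' : EuclideanSpace ℝ (Fin 2)) (v' : ℕ → EuclideanSpace ℝ (Fin 2)),
      v' n = v' 0 ∧
      (∀ i ≤ n, dist q' (v' i) = dist q (v i)) ∧
      (∀ i, 1 ≤ i → i ≤ n → dist (v' (i - 1)) (v' i) = dist (v (i - 1)) (v i)) :=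
  stmt3_general n q v hclose hsum
end
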